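/- In the Acc-DNGD-NSC setup, define γ₀ = L/(1−α₀), the sequences γ_{t+1} = (1−α_t)γ_t and λ₀ = 1, λ_{t+1} = (1−α_t)λ_t, and f̂(t) = (1/n)Σ_i [ f_i(y_i(t)) + ⟨∇f_i(y_i(t)), ȳ(t) − y_i(t)⟩ ]. Define Φ_t : ℝ^N → ℝ by Φ₀(ω) = f(x̄(0)) + (γ₀/2)‖ω − v̄(0)‖² and Φ_{t+1}(ω) = (1−α_t)Φ_t(ω) + α_t[ f̂(t) + ⟨g(t), ω − ȳ(t)⟩ ]. Then: (1) for every ω and t, Φ_t(ω) ≤ f(ω) + λ_t(Φ₀(ω) − f(ω)); and (2) Φ_t(ω) = φ_t* + (γ_t/2)‖ω − v̄(t)‖² for all ω and t, where φ₀* = f(x̄(0)) and φ_{t+1}* = (1−α_t)φ_t* + α_t f̂(t) − (η_t/2)‖g(t)‖² + α_t⟨g(t), v̄(t) − ȳ(t)⟩. -/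

import Mathlib

/-! The affine minorant `f̂(t) + ⟪g(t), ω - ȳ(t)⟫` lies below `f` because each `f_i` lies above
its tangent plane at `y_i(t)`; hence the recursion for `Φ_t` contracts `Φ_t - f` by the factor
`1 - α_t`, which gives (1).

For (2), gradient tracking with a column-stochastic `W` keeps `∑ᵢ sᵢ(t) = ∑ᵢ ∇fᵢ(yᵢ(t))`, so
`v̄(t+1) = v̄(t) - (η_t/α_t) g(t)`. The rule defining `α_{t+1}` amounts to `α_t² = η_t γ_{t+1}`, and
with this identity completing the square shows that a convex combination of the quadratic
`φ + (γ/2)‖ω - v̄‖²` with an affine function is again of this form, with centre `v̄(t+1)`. -/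

open scoped RealInnerProductSpace

/-- Coercion of a plain vector into Euclidean space (so that ‖·‖ is the 2-norm). -/
def toE {n : ℕ} (v : Fin n → ℝ) : EuclideanSpace ℝ (Fin n) := WithLp.toLp 2 v

open Finset Set

section Gradient

variable {E : Type*} [NormedAddCommGroup E] [InnerProductSpace ℝ E] [CompleteSpace E]

theorem ConvexOn.add_inner_le_of_hasGradientAt {f : E → ℝ} {f' a : E}
    (hf : ConvexOn ℝ univ f) (hfa : HasGradientAt f f' a) (b : E) :
    f a + ⟪f', b - a⟫ ≤ f b := by
  have hderiv : HasDerivAt (f ∘ AffineMap.lineMap (k := ℝ) a b) ⟪f', b - a⟫ 0 := by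
    have hfa' := hfa.hasFDerivAt
    rw [← AffineMap.lineMap_apply_zero a b (k := ℝ)] at hfa'
    simpa using hfa'.comp_hasDerivAt (0 : ℝ) AffineMap.hasDerivAt_lineMap
  have hslope := (hf.comp_affineMap (AffineMap.lineMap a b)).le_slope_of_hasDerivAt
    (mem_univ 0) (mem_univ 1) one_pos hderiv
  simp only [slope_def_field, Function.comp_apply, AffineMap.lineMap_apply_zero,
    AffineMap.lineMap_apply_one, sub_zero, div_one] at hslope
  linarith

theorem HasGradientAt.const_mul_sum {ι : Type*} {s : Finset ι} {f : ι → E → ℝ} {f' : ι → E}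
    {x : E} (hf : ∀ i ∈ s, HasGradientAt (f i) (f' i) x) (c : ℝ) :
    HasGradientAt (fun w => c * ∑ i ∈ s, f i w) (c • ∑ i ∈ s, f' i) x := by
  rw [hasGradientAt_iff_hasFDerivAt, map_smul, map_sum]
  exact (HasFDerivAt.fun_sum fun i hi => (hf i hi).hasFDerivAt).const_mul c

theorem average_linearization_le {ι : Type*} [Fintype ι] {f : ι → E → ℝ} {y : ι → E}
    (hf : ∀ i, ConvexOn ℝ univ (f i)) (hd : ∀ i, DifferentiableAt ℝ (f i) (y i))
    {c : ℝ} (hc : 0 ≤ c) (z ω : E) :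
    c * ∑ i, (f i (y i) + ⟪gradient (f i) (y i), z - y i⟫)
        + ⟪c • ∑ i, gradient (f i) (y i), ω - z⟫ ≤ c * ∑ i, f i ω := by
  rw [real_inner_smul_left, sum_inner, ← mul_add, ← Finset.sum_add_distrib]
  gcongr with i
  rw [add_assoc, ← inner_add_right, add_comm (z - y i), sub_add_sub_cancel]
  exact (hf i).add_inner_le_of_hasGradientAt (hd i).hasGradientAt ω

end Gradient

section Mixing

variable {ι E : Type*} [Fintype ι] [AddCommGroup E] [Module ℝ E]

theorem sum_sum_smul_eq_sum_of_colSum_eq_one {W : Matrix ι ι ℝ} (hW : ∀ j, ∑ i, W i j = 1)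
    (u : ι → E) : ∑ i, ∑ j, W i j • u j = ∑ j, u j := by
  rw [Finset.sum_comm]
  simp only [← Finset.sum_smul, hW, one_smul]

theorem sum_eq_sum_of_tracking {W : Matrix ι ι ℝ} (hW : ∀ j, ∑ i, W i j = 1)
    {s a : ℕ → ι → E} (hs : ∀ t i, s (t + 1) i = ∑ j, W i j • s t j + a (t + 1) i - a t i)
    (h0 : ∑ i, s 0 i = ∑ i, a 0 i) (t : ℕ) : ∑ i, s t i = ∑ i, a t i := by
  induction t with
  | zero => exact h0
  | succ t ih =>
    simp only [hs, Finset.sum_sub_distrib, Finset.sum_add_distrib,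
      sum_sum_smul_eq_sum_of_colSum_eq_one hW, ih, add_sub_cancel_left]

end Mixing

theorem le_add_mul_sub_of_convex_update {Φ ℓ α lam : ℕ → ℝ} {F : ℝ}
    (hα : ∀ t, α t ∈ Set.Icc 0 1) (hℓ : ∀ t, ℓ t ≤ F)
    (hΦ : ∀ t, Φ (t + 1) = (1 - α t) * Φ t + α t * ℓ t)
    (hlam0 : lam 0 = 1) (hlam : ∀ t, lam (t + 1) = (1 - α t) * lam t) (t : ℕ) :
    Φ t ≤ F + lam t * (Φ 0 - F) := by
  induction t with
  | zero => simp [hlam0]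
  | succ t ih =>
    obtain ⟨hα0, hα1⟩ := hα t
    have h1 := mul_le_mul_of_nonneg_left ih (sub_nonneg.2 hα1)
    have h2 := mul_le_mul_of_nonneg_left (hℓ t) hα0
    rw [hΦ, hlam]
    linarith

theorem sq_eq_mul_succ_of_recursion {α η γ : ℕ → ℝ} {L : ℝ} (hη : ∀ t, η t ≠ 0)
    (hα0 : α 0 ^ 2 = η 0 * L) (hα01 : α 0 ≠ 1) (hγ0 : γ 0 = L / (1 - α 0))
    (hγ : ∀ t, γ (t + 1) = (1 - α t) * γ t)
    (hα : ∀ t, α (t + 1) ^ 2 = η (t + 1) / η t * (1 - α (t + 1)) * α t ^ 2) (t : ℕ) :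
    α t ^ 2 = η t * γ (t + 1) := by
  induction t with
  | zero =>
    rw [hγ, hγ0, mul_div_cancel₀ _ (sub_ne_zero.2 hα01.symm), hα0]
  | succ t ih =>
    rw [hα, ih, hγ (t + 1)]
    field_simp [hη t]

section Quadratic

variable {E : Type*} [NormedAddCommGroup E] [InnerProductSpace ℝ E]

theorem convex_update_quadratic_eq {φ γ α η c : ℝ} {v g y : E} (ω : E) (hα : α ≠ 0)
    (hαη : α ^ 2 = η * ((1 - α) * γ)) :
    (1 - α) * (φ + γ / 2 * ‖ω - v‖ ^ 2) + α * (c + ⟪g, ω - y⟫) =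
      ((1 - α) * φ + α * c - η / 2 * ‖g‖ ^ 2 + α * ⟪g, v - y⟫)
        + (1 - α) * γ / 2 * ‖ω - (v - (η / α) • g)‖ ^ 2 := by
  have hsplit : ⟪g, ω - y⟫ = ⟪g, ω - v⟫ + ⟪g, v - y⟫ := by
    rw [← inner_add_right, sub_add_sub_cancel]
  have hnorm : ‖ω - (v - (η / α) • g)‖ ^ 2
      = ‖ω - v‖ ^ 2 + 2 * (η / α) * ⟪g, ω - v⟫ + (η / α) ^ 2 * ‖g‖ ^ 2 := by
    rw [sub_sub_eq_add_sub, add_sub_right_comm, norm_add_sq_real, real_inner_smul_right,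
      real_inner_comm, norm_smul, mul_pow, Real.norm_eq_abs, sq_abs]
    ring
  have hlin : (1 - α) * γ * (η / α) = α := by
    field_simp
    linear_combination -hαη
  have hquad : (1 - α) * γ / 2 * (η / α) ^ 2 = η / 2 := by
    field_simp
    linear_combination -η * hαη
  rw [hsplit, hnorm]
  linear_combination (-⟪g, ω - v⟫) * hlin - ‖g‖ ^ 2 * hquad

theorem eq_add_sq_of_convex_update {Φ : ℕ → E → ℝ} {φ γ α η c : ℕ → ℝ} {v g y : ℕ → E}
    (hα : ∀ t, α t ≠ 0) (hαη : ∀ t, α t ^ 2 = η t * γ (t + 1))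
    (hγ : ∀ t, γ (t + 1) = (1 - α t) * γ t)
    (hv : ∀ t, v (t + 1) = v t - (η t / α t) • g t)
    (hΦ0 : ∀ ω, Φ 0 ω = φ 0 + γ 0 / 2 * ‖ω - v 0‖ ^ 2)
    (hΦ : ∀ t ω, Φ (t + 1) ω = (1 - α t) * Φ t ω + α t * (c t + ⟪g t, ω - y t⟫))
    (hφ : ∀ t, φ (t + 1) = (1 - α t) * φ t + α t * c t - η t / 2 * ‖g t‖ ^ 2
        + α t * ⟪g t, v t - y t⟫)
    (t : ℕ) (ω : E) : Φ t ω = φ t + γ t / 2 * ‖ω - v t‖ ^ 2 := by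
  induction t with
  | zero => exact hΦ0 ω
  | succ t ih =>
    rw [hΦ, ih, convex_update_quadratic_eq ω (hα t) (hγ t ▸ hαη t), hφ, hγ, hv]

end Quadratic

theorem stmt_12_general (n N : ℕ) (hn : 0 < n)
    (f : Fin n → EuclideanSpace ℝ (Fin N) → ℝ)
    (L : ℝ) (hL : 0 < L)
    (hdiff : ∀ i, Differentiable ℝ (f i))
    (hconv : ∀ i, ConvexOn ℝ Set.univ (f i))
    -- consensus matrix
    (W : Matrix (Fin n) (Fin n) ℝ)
    (hWcol : ∀ j, ∑ i, W i j = 1)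
    -- step sizes and the α-sequence
    (ηs : ℕ → ℝ) (hηmem : ∀ t, ηs t ∈ Set.Ioo (0 : ℝ) (1 / L))
    (α : ℕ → ℝ) (hα0 : α 0 = Real.sqrt (ηs 0 * L)) (hα0mem : α 0 ∈ Set.Ioo (0 : ℝ) 1)
    (hαmem : ∀ t : ℕ, α (t + 1) ∈ Set.Ioo (0 : ℝ) 1)
    (hαrec : ∀ t : ℕ, α (t + 1) ^ 2 = ηs (t + 1) / ηs t * (1 - α (t + 1)) * α t ^ 2)
    -- the global objective
    (F : EuclideanSpace ℝ (Fin N) → ℝ) (hF : F = fun w => (n : ℝ)⁻¹ * ∑ i, f i w)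
    -- the algorithm
    (v y s : ℕ → Fin n → EuclideanSpace ℝ (Fin N))
    (hy0 : ∀ i, y 0 i = 0)
    (hs0 : ∀ i, s 0 i = gradient F 0)
    (hvup : ∀ t i, v (t + 1) i = (∑ j, W i j • v t j) - (ηs t / α t) • s t i)
    (hsup : ∀ t i, s (t + 1) i =
      (∑ j, W i j • s t j) + gradient (f i) (y (t + 1) i) - gradient (f i) (y t i))
    -- averages, inexact gradient and f̂
    (xbar vbar ybar g : ℕ → EuclideanSpace ℝ (Fin N))
    (hvbar : ∀ t, vbar t = (n : ℝ)⁻¹ • ∑ i, v t i)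
    (hg : ∀ t, g t = (n : ℝ)⁻¹ • ∑ i, gradient (f i) (y t i))
    (fhat : ℕ → ℝ)
    (hfhat : ∀ t, fhat t =
      (n : ℝ)⁻¹ * ∑ i, (f i (y t i) + ⟪gradient (f i) (y t i), ybar t - y t i⟫))
    -- the sequences γ_t and λ_t
    (γ : ℕ → ℝ) (hγ0 : γ 0 = L / (1 - α 0)) (hγrec : ∀ t, γ (t + 1) = (1 - α t) * γ t)
    (lam : ℕ → ℝ) (hlam0 : lam 0 = 1) (hlamrec : ∀ t, lam (t + 1) = (1 - α t) * lam t)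
    -- the estimate functions Φ_t
    (Φ : ℕ → EuclideanSpace ℝ (Fin N) → ℝ)
    (hΦ0 : ∀ ω, Φ 0 ω = F (xbar 0) + γ 0 / 2 * ‖ω - vbar 0‖ ^ 2)
    (hΦrec : ∀ t ω, Φ (t + 1) ω = (1 - α t) * Φ t ω + α t * (fhat t + ⟪g t, ω - ybar t⟫))
    -- the sequence φ_t*
    (φs : ℕ → ℝ) (hφs0 : φs 0 = F (xbar 0))
    (hφsrec : ∀ t, φs (t + 1) = (1 - α t) * φs t + α t * fhat t - ηs t / 2 * ‖g t‖ ^ 2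
        + α t * ⟪g t, vbar t - ybar t⟫) :
    (∀ t ω, Φ t ω ≤ F ω + lam t * (Φ 0 ω - F ω)) ∧
    (∀ t ω, Φ t ω = φs t + γ t / 2 * ‖ω - vbar t‖ ^ 2) := by
  have hα : ∀ t, α t ∈ Set.Ioo 0 1 := fun | 0 => hα0mem | t + 1 => hαmem t
  have hgradF : HasGradientAt F (g 0) 0 := by
    rw [hF, hg]
    simpa only [hy0] using HasGradientAt.const_mul_sum
      (fun i _ => ((hdiff i) 0).hasGradientAt) (n : ℝ)⁻¹
  have hs_sum : ∀ t, ∑ i, s t i = ∑ i, gradient (f i) (y t i) := by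
    refine sum_eq_sum_of_tracking hWcol (a := fun t i => gradient (f i) (y t i)) hsup ?_
    simp only [hs0, hgradF.gradient, hg, hy0, Finset.sum_const, Finset.card_univ,
      Fintype.card_fin, ← Nat.cast_smul_eq_nsmul ℝ,
      smul_inv_smul₀ (Nat.cast_ne_zero (R := ℝ) |>.2 hn.ne')]
  have hv_succ : ∀ t, vbar (t + 1) = vbar t - (ηs t / α t) • g t := by
    intro t
    simp only [hvbar, hvup, Finset.sum_sub_distrib, sum_sum_smul_eq_sum_of_colSum_eq_one hWcol,
      ← Finset.smul_sum, hs_sum, hg, smul_sub, smul_comm (n : ℝ)⁻¹]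
  have hαγ := sq_eq_mul_succ_of_recursion (fun t => (hηmem t).1.ne')
    (by rw [hα0, Real.sq_sqrt (mul_pos (hηmem 0).1 hL).le]) (hα 0).2.ne hγ0 hγrec hαrec
  have hlower : ∀ t ω, fhat t + ⟪g t, ω - ybar t⟫ ≤ F ω := by
    intro t ω
    rw [hfhat, hg, hF]
    exact average_linearization_le hconv (fun i => (hdiff i) _) (by positivity) _ ω
  refine ⟨fun t ω => ?_, fun t ω => ?_⟩
  · exact le_add_mul_sub_of_convex_update (Φ := (Φ · ω)) (fun t => Ioo_subset_Icc_self (hα t))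
      (hlower · ω) (hΦrec · ω) hlam0 hlamrec t
  · exact eq_add_sq_of_convex_update (fun t => (hα t).1.ne') hαγ hγrec hv_succ
      (fun ω => by rw [hΦ0, hφs0]) hΦrec hφsrec t ω

/-- properties of the estimate functions Φ_t of Acc-DNGD-NSC:
(1) Φ_t(ω) ≤ f(ω) + λ_t(Φ₀(ω) − f(ω)); and (2) Φ_t(ω) = φ_t* + (γ_t/2)‖ω − v̄(t)‖²
with φ_t* given by the stated recursion. -/
theorem stmt_12 (n N : ℕ) (hn : 0 < n)
    (f : Fin n → EuclideanSpace ℝ (Fin N) → ℝ)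
    (L : ℝ) (hL : 0 < L)
    (hdiff : ∀ i, Differentiable ℝ (f i))
    (hconv : ∀ i, ConvexOn ℝ Set.univ (f i))
    (hsmooth : ∀ i u w, ‖gradient (f i) u - gradient (f i) w‖ ≤ L * ‖u - w‖)
    -- consensus matrix
    (W : Matrix (Fin n) (Fin n) ℝ)
    (hWnonneg : ∀ i j, 0 ≤ W i j)
    (hWrow : ∀ i, ∑ j, W i j = 1)
    (hWcol : ∀ j, ∑ i, W i j = 1)
    (σ : ℝ) (hσ0 : 0 < σ) (hσ1 : σ < 1)
    (havg : ∀ ω : EuclideanSpace ℝ (Fin n),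
      ‖toE (fun i => ∑ j, W i j * ω j) - toE (fun _ => (n : ℝ)⁻¹ * ∑ j, ω j)‖ ≤
        σ * ‖ω - toE (fun _ => (n : ℝ)⁻¹ * ∑ j, ω j)‖)
    -- step sizes and the α-sequence
    (ηs : ℕ → ℝ) (hηmem : ∀ t, ηs t ∈ Set.Ioo (0 : ℝ) (1 / L))
    (α : ℕ → ℝ) (hα0 : α 0 = Real.sqrt (ηs 0 * L)) (hα0mem : α 0 ∈ Set.Ioo (0 : ℝ) 1)
    (hαmem : ∀ t : ℕ, α (t + 1) ∈ Set.Ioo (0 : ℝ) 1)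
    (hαrec : ∀ t : ℕ, α (t + 1) ^ 2 = ηs (t + 1) / ηs t * (1 - α (t + 1)) * α t ^ 2)
    -- the global objective
    (F : EuclideanSpace ℝ (Fin N) → ℝ) (hF : F = fun w => (n : ℝ)⁻¹ * ∑ i, f i w)
    -- the algorithm
    (x v y s : ℕ → Fin n → EuclideanSpace ℝ (Fin N))
    (hx0 : ∀ i, x 0 i = 0) (hv0 : ∀ i, v 0 i = 0) (hy0 : ∀ i, y 0 i = 0)
    (hs0 : ∀ i, s 0 i = gradient F 0)
    (hxup : ∀ t i, x (t + 1) i = (∑ j, W i j • y t j) - ηs t • s t i)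
    (hvup : ∀ t i, v (t + 1) i = (∑ j, W i j • v t j) - (ηs t / α t) • s t i)
    (hyup : ∀ t i, y (t + 1) i = (1 - α (t + 1)) • x (t + 1) i + α (t + 1) • v (t + 1) i)
    (hsup : ∀ t i, s (t + 1) i =
      (∑ j, W i j • s t j) + gradient (f i) (y (t + 1) i) - gradient (f i) (y t i))
    -- averages, inexact gradient and f̂
    (xbar vbar ybar g : ℕ → EuclideanSpace ℝ (Fin N))
    (hxbar : ∀ t, xbar t = (n : ℝ)⁻¹ • ∑ i, x t i)
    (hvbar : ∀ t, vbar t = (n : ℝ)⁻¹ • ∑ i, v t i)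
    (hybar : ∀ t, ybar t = (n : ℝ)⁻¹ • ∑ i, y t i)
    (hg : ∀ t, g t = (n : ℝ)⁻¹ • ∑ i, gradient (f i) (y t i))
    (fhat : ℕ → ℝ)
    (hfhat : ∀ t, fhat t =
      (n : ℝ)⁻¹ * ∑ i, (f i (y t i) + ⟪gradient (f i) (y t i), ybar t - y t i⟫))
    -- the sequences γ_t and λ_t
    (γ : ℕ → ℝ) (hγ0 : γ 0 = L / (1 - α 0)) (hγrec : ∀ t, γ (t + 1) = (1 - α t) * γ t)
    (lam : ℕ → ℝ) (hlam0 : lam 0 = 1) (hlamrec : ∀ t, lam (t + 1) = (1 - α t) * lam t)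
    -- the estimate functions Φ_t
    (Φ : ℕ → EuclideanSpace ℝ (Fin N) → ℝ)
    (hΦ0 : ∀ ω, Φ 0 ω = F (xbar 0) + γ 0 / 2 * ‖ω - vbar 0‖ ^ 2)
    (hΦrec : ∀ t ω, Φ (t + 1) ω = (1 - α t) * Φ t ω + α t * (fhat t + ⟪g t, ω - ybar t⟫))
    -- the sequence φ_t*
    (φs : ℕ → ℝ) (hφs0 : φs 0 = F (xbar 0))
    (hφsrec : ∀ t, φs (t + 1) = (1 - α t) * φs t + α t * fhat t - ηs t / 2 * ‖g t‖ ^ 2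
        + α t * ⟪g t, vbar t - ybar t⟫) :
    (∀ t ω, Φ t ω ≤ F ω + lam t * (Φ 0 ω - F ω)) ∧
    (∀ t ω, Φ t ω = φs t + γ t / 2 * ‖ω - vbar t‖ ^ 2) :=
  stmt_12_general n N hn f L hL hdiff hconv W hWcol ηs hηmem α hα0 hα0mem hαmem hαrec F hF v y s hy0
    hs0 hvup hsup xbar vbar ybar g hvbar hg fhat hfhat γ hγ0 hγrec lam hlam0 hlamrec Φ hΦ0 hΦrec φs
    hφs0 hφsrec
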